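/- Let σ(z) = tanh(z/√2), let Q : [−1,1] → ℝ be odd, continuously differentiable on (−1,1), strictly increasing, with Q(1) = 1, and set Q₁(u) = (3/2)(u − u³/3). Assume u ↦ |Q(u) − Q₁(u)|/(1 − u²)³ is integrable on (0,1). Define Φ₁(z) = (4/3)·σ'(z)·∫₀^{σ(z)} (Q(v) − Q₁(v))/(1 − v²)³ dv. Then the dynamic moment 𝓙₁[Q] := ∫_{−∞}^{∞} Q'(σ(z))·Φ₁(z) dz satisfies 𝓙₁[Q] = (8/3)·∫₀¹ (Q(u) − Q₁(u))·(1 − Q(u))/(1 − u²)³ du. -/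

import Mathlib

/-!
Substituting `u = σ(z)` turns `𝓙₁[Q]` into `(4/3) ∫_{-1}^{1} G(u) Q'(u) du`, where
`G(u) = ∫₀ᵘ (Q − Q₁)/(1 − v²)³` is even (its integrand is odd), so `𝓙₁[Q] = (8/3) ∫₀¹ G Q'`.
Integrating by parts against `Q − Q(1)` kills both boundary terms (`G(0) = 0`) and gives
`∫₀¹ G Q' = ∫₀¹ G' (1 − Q)`. Monotonicity alone does not make `Q` left-continuous at `1`;
the integrability hypothesis does: if `Q(1⁻) ≠ Q₁(1)`, then `|Q − Q₁|/(1 − u²)³` grows like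
`1/(1 − u)`.
-/

open MeasureTheory intervalIntegral

/-- The heteroclinic profile `σ(z) = tanh(z/√2)`. -/
noncomputable def sigma (z : ℝ) : ℝ := Real.tanh (z / Real.sqrt 2)

/-- The NMN reference kernel `Q₁(u) = (3/2)(u − u³/3)`. -/
noncomputable def Q₁ (u : ℝ) : ℝ := (3 / 2) * (u - u ^ 3 / 3)

open Set Filter Topology Asymptotics

theorem Real.hasDerivAt_tanh (x : ℝ) : HasDerivAt Real.tanh (1 - Real.tanh x ^ 2) x := by
  have hcosh : Real.cosh x ≠ 0 := (Real.cosh_pos x).ne'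
  have h := (Real.hasDerivAt_sinh x).div (Real.hasDerivAt_cosh x) hcosh
  rw [show Real.sinh / Real.cosh = Real.tanh from
    funext fun y => (Real.tanh_eq_sinh_div_cosh y).symm] at h
  refine h.congr_deriv ?_
  rw [Real.tanh_eq_sinh_div_cosh]
  field_simp

theorem hasDerivAt_sigma (z : ℝ) : HasDerivAt sigma ((1 - sigma z ^ 2) / Real.sqrt 2) z := by
  have h := (Real.hasDerivAt_tanh (z / Real.sqrt 2)).comp z ((hasDerivAt_id z).div_const _)
  refine h.congr_deriv ?_
  simp only [sigma]
  ring

theorem deriv_sigma_pos (z : ℝ) : 0 < deriv sigma z := by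
  rw [(hasDerivAt_sigma z).deriv]
  exact div_pos (by linarith [show sigma z ^ 2 < 1 from Real.tanh_sq_lt_one _]) (by positivity)

theorem range_sigma : range sigma = Ioo (-1) 1 := by
  have hsurj : Function.Surjective fun z : ℝ => z / Real.sqrt 2 :=
    fun x => ⟨x * Real.sqrt 2, by field_simp⟩
  rw [show sigma = Real.tanh ∘ fun z => z / Real.sqrt 2 from rfl, hsurj.range_comp, ← image_univ,
    Real.tanh_bijOn.image_eq]

theorem integral_comp_mul_deriv_eq_setIntegral_range {φ φ' : ℝ → ℝ}
    (hφ : ∀ x, HasDerivAt φ (φ' x) x) (hφ' : ∀ x, 0 < φ' x) (f : ℝ → ℝ) :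
    ∫ x, f (φ x) * φ' x = ∫ u in range φ, f u := by
  have hinj : InjOn φ univ := (strictMono_of_hasDerivAt_pos hφ hφ').injective.injOn
  rw [← image_univ, integral_image_eq_integral_abs_deriv_smul MeasurableSet.univ
    (fun x _ => (hφ x).hasDerivWithinAt) hinj, setIntegral_univ]
  simp_rw [abs_of_pos (hφ' _), smul_eq_mul, mul_comm]

theorem integral_comp_sigma_mul_deriv (f : ℝ → ℝ) :
    ∫ z, f (sigma z) * deriv sigma z = ∫ u in (-1)..1, f u := by
  rw [integral_comp_mul_deriv_eq_setIntegral_range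
    (fun z => (hasDerivAt_sigma z).differentiableAt.hasDerivAt) deriv_sigma_pos, range_sigma,
    integral_of_le (by norm_num), integral_Ioc_eq_integral_Ioo]

theorem integral_neg_to_eq_two_mul_of_even {f : ℝ → ℝ} (hf : ∀ x, f (-x) = f x) {a : ℝ}
    (hint : IntervalIntegrable f volume 0 a) :
    ∫ x in -a..a, f x = 2 * ∫ x in 0..a, f x := by
  have hint' : IntervalIntegrable f volume (-a) 0 := by
    simpa [hf] using (IntervalIntegrable.iff_comp_neg (by simp)).1 hint.symm
  have hreflect : ∫ x in -a..0, f x = ∫ x in 0..a, f x := by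
    simpa [hf] using (integral_comp_neg (a := 0) (b := a) f).symm
  rw [← integral_add_adjacent_intervals hint' hint, hreflect, two_mul]

theorem integral_zero_to_neg_of_odd {g : ℝ → ℝ} (hg : ∀ x, g (-x) = -g x) (x : ℝ) :
    ∫ v in 0..(-x), g v = ∫ v in 0..x, g v := by
  have h := integral_comp_neg (a := 0) (b := x) g
  simp only [hg, intervalIntegral.integral_neg, neg_zero] at h
  rw [integral_symm, ← h, neg_neg]

theorem deriv_neg_eq_of_odd {Q : ℝ → ℝ} (hQ : ∀ x, Q (-x) = -Q x) (x : ℝ) :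
    deriv Q (-x) = deriv Q x := by
  have h := deriv_comp_neg Q (x := x)
  rw [funext hQ, deriv.fun_neg] at h
  linarith

theorem eq_zero_of_tendsto_nhdsLT_of_isBigO_integrableOn {f g : ℝ → ℝ} {a b L : ℝ} (hab : a < b)
    (hf : Tendsto f (𝓝[<] b) (𝓝 L)) (hfg : (fun x => (x - b)⁻¹ * f x) =O[𝓝[<] b] g)
    (hg : IntegrableOn g (Ioo a b)) : L = 0 := by
  by_contra hL
  have hf_away : (fun _ => (1 : ℝ)) =O[𝓝[<] b] f := by
    refine (isBigO_const_left_iff_pos_le_norm one_ne_zero).2 ⟨‖L‖ / 2, by positivity, ?_⟩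
    exact (hf.norm.eventually (lt_mem_nhds (half_lt_self (norm_pos_iff.2 hL)))).mono
      fun _ => le_of_lt
  have hinv : (fun x => (x - b)⁻¹) =O[𝓝[<] b] g := by
    simpa using ((isBigO_refl (fun x => (x - b)⁻¹) _).mul hf_away).trans hfg
  obtain ⟨s, hs, hs_int⟩ := hinv.integrableAtFilter
    (by fun_prop : Measurable fun x : ℝ => (x - b)⁻¹).stronglyMeasurable.stronglyMeasurableAtFilter
    ⟨Ioo a b, Ioo_mem_nhdsLT hab, hg⟩
  obtain ⟨c, hc, hcs⟩ := mem_nhdsLT_iff_exists_Ioo_subset.1 hs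
  have : IntervalIntegrable (fun x => (x - b)⁻¹) volume c b :=
    (intervalIntegrable_iff_integrableOn_Ioo_of_le hc.le).2 (hs_int.mono_set hcs)
  rw [intervalIntegrable_sub_inv_iff] at this
  exact this.elim (ne_of_lt hc) (· right_mem_uIcc)

theorem isBigO_sub_one_inv_mul_div_one_sub_sq_pow_three (d : ℝ → ℝ) :
    (fun u => (u - 1)⁻¹ * d u) =O[𝓝[<] 1] fun u => d u / (1 - u ^ 2) ^ 3 := by
  refine IsBigO.of_bound 2 ?_
  filter_upwards [Ioo_mem_nhdsLT (show (0 : ℝ) < 1 by norm_num)] with u ⟨hu0, hu1⟩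
  have hw : 0 < 1 - u ^ 2 := by nlinarith
  have hw' : (1 - u ^ 2) ^ 3 ≤ 2 * (1 - u) := by
    calc (1 - u ^ 2) ^ 3 ≤ 1 - u ^ 2 := pow_le_of_le_one hw.le (by nlinarith) (by norm_num)
      _ ≤ 2 * (1 - u) := by nlinarith
  rw [norm_mul, norm_inv, norm_div, Real.norm_of_nonneg (pow_pos hw 3).le, Real.norm_eq_abs,
    abs_of_neg (by linarith : u - 1 < 0), neg_sub]
  rw [inv_mul_eq_div, ← mul_div_assoc, div_le_div_iff₀ (by linarith) (by positivity)]
  nlinarith [norm_nonneg (d u)]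

theorem tendsto_nhdsLT_one_of_integrableOn {Q R : ℝ → ℝ} {c : ℝ}
    (hmono : MonotoneOn Q (Icc 0 1)) (hR : Tendsto R (𝓝[<] 1) (𝓝 c))
    (hint : IntegrableOn (fun u => |Q u - R u| / (1 - u ^ 2) ^ 3) (Ioo 0 1)) :
    Tendsto Q (𝓝[<] 1) (𝓝 c) := by
  have hQ := (hmono.mono Ioo_subset_Icc_self).tendsto_nhdsWithin_Ioo_left
    (nonempty_Ioo.2 zero_lt_one)
    ⟨Q 1, forall_mem_image.2 fun u hu => hmono (Ioo_subset_Icc_self hu) (by norm_num) hu.2.le⟩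
  have hlim := eq_zero_of_tendsto_nhdsLT_of_isBigO_integrableOn zero_lt_one (hQ.sub hR).abs
    (isBigO_sub_one_inv_mul_div_one_sub_sq_pow_three _) hint
  rwa [sub_eq_zero.1 (abs_eq_zero.1 hlim)] at hQ

theorem continuousOn_Icc_of_tendsto_nhdsLT {f : ℝ → ℝ} {a b : ℝ}
    (hf : ∀ x ∈ Ico a b, ContinuousAt f x) (hb : Tendsto f (𝓝[<] b) (𝓝 (f b))) :
    ContinuousOn f (Icc a b) := by
  intro x hx
  rcases hx.2.lt_or_eq with hxb | rfl
  · exact (hf x ⟨hx.1, hxb⟩).continuousWithinAt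
  · exact (continuousWithinAt_Iio_iff_Iic.1 hb).mono Icc_subset_Iic_self

theorem intervalIntegrable_deriv_of_monotoneOn {f : ℝ → ℝ} {a b : ℝ} (hab : a ≤ b)
    (hcont : ContinuousOn f (Icc a b)) (hmono : MonotoneOn f (Icc a b))
    (hderiv : ∀ x ∈ Ioo a b, DifferentiableAt ℝ f x) :
    IntervalIntegrable (deriv f) volume a b := by
  rw [intervalIntegrable_iff_integrableOn_Ioc_of_le hab]
  refine integrableOn_deriv_of_nonneg hcont (fun x hx => (hderiv x hx).hasDerivAt) fun x hx => ?_
  rw [← derivWithin_of_isOpen isOpen_Ioo hx]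
  exact (hmono.mono Ioo_subset_Icc_self).derivWithin_nonneg

theorem integral_primitive_mul_deriv {g f f' : ℝ → ℝ} {a b : ℝ} (hab : a ≤ b)
    (hg : IntervalIntegrable g volume a b) (hg_cont : ContinuousOn g (Ioo a b))
    (hf : ContinuousOn f (Icc a b)) (hff' : ∀ x ∈ Ioo a b, HasDerivAt f (f' x) x)
    (hf' : IntervalIntegrable f' volume a b) :
    ∫ x in a..b, (∫ t in a..x, g t) * f' x = ∫ x in a..b, g x * (f b - f x) := by
  have hprim : ∀ x ∈ Ioo (min a b) (max a b), HasDerivAt (fun x => ∫ t in a..x, g t) (g x) x := by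
    rw [min_eq_left hab, max_eq_right hab]
    intro x hx
    have hx' : x ∈ uIcc a b := by rw [uIcc_of_le hab]; exact Ioo_subset_Icc_self hx
    exact integral_hasDerivAt_right (hg.mono_set (uIcc_subset_uIcc_left hx'))
      (hg_cont.stronglyMeasurableAtFilter isOpen_Ioo x hx)
      (hg_cont.continuousAt (isOpen_Ioo.mem_nhds hx))
  have hparts := integral_mul_deriv_eq_deriv_mul_of_hasDerivAt (v := fun x => f x - f b)
    (continuousOn_primitive_interval' hg left_mem_uIcc)
    (by rw [uIcc_of_le hab]; exact hf.sub continuousOn_const) hprim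
    (by rw [min_eq_left hab, max_eq_right hab]; exact fun x hx => (hff' x hx).sub_const (f b))
    hg hf'
  simp only [integral_same, sub_self, mul_zero, zero_mul, zero_sub] at hparts
  rw [hparts, ← intervalIntegral.integral_neg]
  congr 1
  ext x
  ring

/-- The integrand of `Φ₁`: `Φ₁(z) = (4/3) σ'(z) ∫₀^{σ(z)} defectDensity Q`. -/
noncomputable def defectDensity (Q : ℝ → ℝ) (v : ℝ) : ℝ := (Q v - Q₁ v) / (1 - v ^ 2) ^ 3

section defectDensity

variable {Q : ℝ → ℝ}

theorem defectDensity_neg (hodd : ∀ u, Q (-u) = -Q u) (v : ℝ) :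
    defectDensity Q (-v) = -defectDensity Q v := by
  simp only [defectDensity, Q₁, hodd, neg_sq]
  ring

theorem continuousOn_defectDensity (hQ : ContinuousOn Q (Ioo (-1) 1)) :
    ContinuousOn (defectDensity Q) (Ioo (-1) 1) := by
  refine (hQ.sub (by unfold Q₁; fun_prop)).div (by fun_prop) fun v hv => ?_
  have : v ^ 2 < 1 := by nlinarith [hv.1, hv.2]
  exact pow_ne_zero 3 (by linarith)

theorem intervalIntegrable_defectDensity (hQ : ContinuousOn Q (Ioo (-1) 1))
    (hint : IntegrableOn (fun u => |Q u - Q₁ u| / (1 - u ^ 2) ^ 3) (Ioo 0 1)) :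
    IntervalIntegrable (defectDensity Q) volume 0 1 := by
  rw [intervalIntegrable_iff_integrableOn_Ioo_of_le zero_le_one]
  have hmeas : AEStronglyMeasurable (defectDensity Q) (volume.restrict (Ioo 0 1)) :=
    ((continuousOn_defectDensity hQ).mono (Ioo_subset_Ioo (by norm_num) le_rfl))
      |>.aestronglyMeasurable measurableSet_Ioo
  refine hint.mono' hmeas ((ae_restrict_iff' measurableSet_Ioo).2 (.of_forall fun u hu => ?_))
  have : 0 < 1 - u ^ 2 := by nlinarith [hu.1, hu.2]
  rw [Real.norm_eq_abs, defectDensity, abs_div, abs_of_pos (pow_pos this 3)]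

theorem continuousOn_Icc_zero_one_of_integrableOn (hQ : ContinuousOn Q (Ioo (-1) 1))
    (hmono : MonotoneOn Q (Icc 0 1)) (hQ1 : Q 1 = 1)
    (hint : IntegrableOn (fun u => |Q u - Q₁ u| / (1 - u ^ 2) ^ 3) (Ioo 0 1)) :
    ContinuousOn Q (Icc 0 1) := by
  refine continuousOn_Icc_of_tendsto_nhdsLT
    (fun x hx => hQ.continuousAt (isOpen_Ioo.mem_nhds ⟨by linarith [hx.1], hx.2⟩)) ?_
  have hQ₁ : Tendsto Q₁ (𝓝[<] 1) (𝓝 1) := by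
    have h := ((by unfold Q₁; fun_prop : Continuous Q₁).tendsto 1).mono_left
      (nhdsWithin_le_nhds (s := Iio 1))
    rwa [show Q₁ 1 = 1 by norm_num [Q₁]] at h
  rw [hQ1]
  exact tendsto_nhdsLT_one_of_integrableOn hmono hQ₁ hint

end defectDensity

/-- Single-integral formula for the dynamic moment: for `Q` odd, `C¹` on `(−1,1)`,
strictly increasing, with `Q(1) = 1`, and integrability of
`u ↦ |Q(u) − Q₁(u)|/(1 − u²)³` on `(0,1)`, the dynamic moment
`𝓙₁[Q] = ∫ Q'(σ(z))·Φ₁(z) dz` equals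
`(8/3)∫₀¹ (Q(u) − Q₁(u))(1 − Q(u))/(1 − u²)³ du`. -/
theorem dynamic_moment_formula
    (Q : ℝ → ℝ) (hodd : ∀ u : ℝ, Q (-u) = -Q u)
    (hQ : ContDiffOn ℝ 1 Q (Set.Ioo (-1) 1))
    (hmono : StrictMonoOn Q (Set.Icc (-1) 1))
    (hQ1 : Q 1 = 1)
    (hint : IntegrableOn (fun u : ℝ => |Q u - Q₁ u| / (1 - u ^ 2) ^ 3) (Set.Ioo 0 1))
    (Φ₁ : ℝ → ℝ)
    (hΦ₁ : ∀ z : ℝ, Φ₁ z =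
      (4 / 3) * deriv sigma z *
        ∫ v in (0:ℝ)..(sigma z), (Q v - Q₁ v) / (1 - v ^ 2) ^ 3) :
    (∫ z : ℝ, deriv Q (sigma z) * Φ₁ z)
      = (8 / 3) * ∫ u in (0:ℝ)..1, (Q u - Q₁ u) * (1 - Q u) / (1 - u ^ 2) ^ 3 := by
  set G := fun x => ∫ v in (0:ℝ)..x, defectDensity Q v
  have hcont : ContinuousOn Q (Ioo (-1) 1) := hQ.continuousOn
  have hdiff : ∀ x ∈ Ioo (0:ℝ) 1, HasDerivAt Q (deriv Q x) x := fun x hx =>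
    ((hQ.differentiableOn one_ne_zero).differentiableAt
      (isOpen_Ioo.mem_nhds ⟨by linarith [hx.1], hx.2⟩)).hasDerivAt
  have hmono01 : MonotoneOn Q (Icc 0 1) :=
    hmono.monotoneOn.mono (Icc_subset_Icc (by norm_num) le_rfl)
  have hQc := continuousOn_Icc_zero_one_of_integrableOn hcont hmono01 hQ1 hint
  have hQ' := intervalIntegrable_deriv_of_monotoneOn zero_le_one hQc hmono01
    fun x hx => (hdiff x hx).differentiableAt
  have hg := intervalIntegrable_defectDensity hcont hint
  have hG : ContinuousOn G (uIcc 0 1) := continuousOn_primitive_interval' hg left_mem_uIcc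
  have heven : ∀ u, 4 / 3 * (G (-u) * deriv Q (-u)) = 4 / 3 * (G u * deriv Q u) := fun u => by
    simp only [G, deriv_neg_eq_of_odd hodd, integral_zero_to_neg_of_odd (defectDensity_neg hodd)]
  calc (∫ z : ℝ, deriv Q (sigma z) * Φ₁ z)
      = ∫ u in (-1)..1, 4 / 3 * (G u * deriv Q u) := by
        rw [← integral_comp_sigma_mul_deriv]
        congr 1 with z
        rw [hΦ₁]
        simp only [G, defectDensity]
        ring
    _ = 8 / 3 * ∫ u in (0:ℝ)..1, G u * deriv Q u := by
        rw [integral_neg_to_eq_two_mul_of_even heven ((hQ'.continuousOn_mul hG).const_mul _),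
          intervalIntegral.integral_const_mul]
        ring
    _ = _ := by
        rw [integral_primitive_mul_deriv zero_le_one hg
          ((continuousOn_defectDensity hcont).mono (Ioo_subset_Ioo (by norm_num) le_rfl))
          hQc hdiff hQ', hQ1]
        simp only [defectDensity, mul_div_right_comm]
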